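/- If ρ and σ are density matrices on the same finite-dimensional space with ‖ρ - σ‖₁ ≤ ε, and λ^Λ denotes restriction to eigenvalues that are at least 1/Λ (with Λ > 0), then the sorted vectors of -log λ over these restricted spectra (padded consistently) satisfy ‖λ^Λ(-log ρ) - λ^Λ(-log σ)‖₁ ≤ Λ ε, using the Lipschitz constant Λ of the logarithm on [1/Λ, ∞). -/

import Mathlib

/-!
Sorted eigenvalues are monotone in the Loewner order (Weyl): if `T ≤ S`, the span of the top
`k + 1` eigenvectors of `T` and the span of the bottom `n - k` eigenvectors of `S` meet
nontrivially, and a common vector `x ≠ 0` gives `λₖ(T)‖x‖² ≤ ⟪Tx, x⟫ ≤ ⟪Sx, x⟫ ≤ λₖ(S)‖x‖²`.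

Mirsky's inequality `∑ₖ |λₖ(A) - λₖ(B)| ≤ ‖A - B‖₁` follows: writing `C = A - B = C⁺ - C⁻`, the
matrix `D = B + C⁺ = A + C⁻` dominates both `A` and `B`, so
`|λₖ(A) - λₖ(B)| ≤ (λₖ(D) - λₖ(A)) + (λₖ(D) - λₖ(B))`, and the right-hand sides sum to
`tr C⁺ + tr C⁻ = ‖C‖₁`. Finally `-log` is `Λ`-Lipschitz on `[1/Λ, ∞)`.
-/

open scoped Matrix ComplexOrder

noncomputable section

namespace QI

def traceNorm {m : Type*} [Fintype m] [DecidableEq m] (A : Matrix m m ℂ) : ℝ :=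
  ∑ i, Real.sqrt ((Matrix.isHermitian_mul_conjTranspose_self Aᴴ).eigenvalues i)

def IsDensityMatrix {m : Type*} [Fintype m] [DecidableEq m] (ρ : Matrix m m ℂ) : Prop :=
  ρ.PosSemidef ∧ ρ.trace = 1

/-- The eigenvalues of a Hermitian matrix sorted in decreasing order. -/
def sortedEigsDesc {n : ℕ} {A : Matrix (Fin n) (Fin n) ℂ} (h : A.IsHermitian) : Fin n → ℝ :=
  fun i => h.eigenvalues (Tuple.sort h.eigenvalues i.rev)

end QI

open QI

open scoped InnerProductSpace MatrixOrder

namespace OrthonormalBasis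

variable {ι 𝕜 E : Type*} [Fintype ι] [RCLike 𝕜] [NormedAddCommGroup E] [InnerProductSpace 𝕜 E]

theorem repr_apply_eq_zero_of_mem_span_image (b : OrthonormalBasis ι 𝕜 E) {s : Set ι} {x : E}
    (hx : x ∈ Submodule.span 𝕜 (b '' s)) {i : ι} (hi : i ∉ s) : b.repr x i = 0 := by
  rw [← b.coe_toBasis, Module.Basis.mem_span_image] at hx
  rw [← b.coe_toBasis_repr_apply]
  exact Finsupp.notMem_support_iff.mp fun h => hi (hx h)

theorem finrank_span_image (b : OrthonormalBasis ι 𝕜 E) (s : Finset ι) :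
    Module.finrank 𝕜 (Submodule.span 𝕜 (b '' s)) = s.card := by
  rw [Set.image_eq_range]
  exact (finrank_span_eq_card (b.orthonormal.linearIndependent.comp _ Subtype.val_injective)).trans
    (Fintype.card_coe s)

end OrthonormalBasis

namespace LinearMap.IsSymmetric

variable {𝕜 E : Type*} [RCLike 𝕜] [NormedAddCommGroup E] [InnerProductSpace 𝕜 E]
  [FiniteDimensional 𝕜 E] {T S : E →ₗ[𝕜] E} {n : ℕ} (hn : Module.finrank 𝕜 E = n)

theorem re_inner_apply_self_eq_sum (hT : T.IsSymmetric) (x : E) :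
    RCLike.re ⟪T x, x⟫_𝕜 =
      ∑ i, hT.eigenvalues hn i * ‖(hT.eigenvectorBasis hn).repr x i‖ ^ 2 := by
  rw [← (hT.eigenvectorBasis hn).repr.inner_map_map, PiLp.inner_apply, map_sum]
  refine Finset.sum_congr rfl fun i _ => ?_
  rw [eigenvectorBasis_apply_self_apply, RCLike.inner_apply, map_mul (starRingEnd 𝕜),
    RCLike.conj_ofReal, mul_left_comm, RCLike.mul_conj, ← RCLike.ofReal_pow, ← RCLike.ofReal_mul,
    RCLike.ofReal_re]

theorem eigenvalues_mul_norm_sq_le_re_inner (hT : T.IsSymmetric) {k : Fin n} {x : E}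
    (hx : x ∈ Submodule.span 𝕜 (hT.eigenvectorBasis hn '' Set.Iic k)) :
    hT.eigenvalues hn k * ‖x‖ ^ 2 ≤ RCLike.re ⟪T x, x⟫_𝕜 := by
  rw [re_inner_apply_self_eq_sum, ← (hT.eigenvectorBasis hn).sum_sq_norm_inner_right,
    Finset.mul_sum]
  refine Finset.sum_le_sum fun i _ => ?_
  rw [← OrthonormalBasis.repr_apply_apply]
  by_cases hi : i ≤ k
  · gcongr
    exact hT.eigenvalues_antitone hn hi
  · simp [(hT.eigenvectorBasis hn).repr_apply_eq_zero_of_mem_span_image hx hi]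

theorem re_inner_le_eigenvalues_mul_norm_sq (hT : T.IsSymmetric) {k : Fin n} {x : E}
    (hx : x ∈ Submodule.span 𝕜 (hT.eigenvectorBasis hn '' Set.Ici k)) :
    RCLike.re ⟪T x, x⟫_𝕜 ≤ hT.eigenvalues hn k * ‖x‖ ^ 2 := by
  rw [re_inner_apply_self_eq_sum, ← (hT.eigenvectorBasis hn).sum_sq_norm_inner_right,
    Finset.mul_sum]
  refine Finset.sum_le_sum fun i _ => ?_
  rw [← OrthonormalBasis.repr_apply_apply]
  by_cases hi : k ≤ i
  · gcongr
    exact hT.eigenvalues_antitone hn hi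
  · simp [(hT.eigenvectorBasis hn).repr_apply_eq_zero_of_mem_span_image hx hi]

theorem eigenvalues_mono (hT : T.IsSymmetric) (hS : S.IsSymmetric) (hTS : T ≤ S) (k : Fin n) :
    hT.eigenvalues hn k ≤ hS.eigenvalues hn k := by
  set V := Submodule.span 𝕜 (hT.eigenvectorBasis hn '' Set.Iic k)
  set W := Submodule.span 𝕜 (hS.eigenvectorBasis hn '' Set.Ici k)
  have hV : Module.finrank 𝕜 V = k + 1 := by
    rw [← Fin.card_Iic, ← (hT.eigenvectorBasis hn).finrank_span_image, Finset.coe_Iic]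
  have hW : Module.finrank 𝕜 W = n - k := by
    rw [← Fin.card_Ici, ← (hS.eigenvectorBasis hn).finrank_span_image, Finset.coe_Ici]
  have hdim : Module.finrank 𝕜 E < Module.finrank 𝕜 V + Module.finrank 𝕜 W := by
    rw [hV, hW, hn]
    omega
  obtain ⟨x, hxV, hxW, hx⟩ : ∃ x ∈ V, x ∈ W ∧ x ≠ 0 := by
    by_contra! h
    exact hdim.not_ge (Submodule.finrank_add_finrank_le_of_disjoint (Submodule.disjoint_def.mpr h))
  have hlow := hT.eigenvalues_mul_norm_sq_le_re_inner hn hxV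
  have hupp := hS.re_inner_le_eigenvalues_mul_norm_sq hn hxW
  have hx2 : 0 < ‖x‖ ^ 2 := by positivity
  have hTSx : RCLike.re ⟪T x, x⟫_𝕜 ≤ RCLike.re ⟪S x, x⟫_𝕜 := by
    simpa [inner_sub_left] using hTS.re_inner_nonneg_left x
  exact le_of_mul_le_mul_right ((hlow.trans hTSx).trans hupp) hx2

theorem eigenvalues_cast (hT : T.IsSymmetric) {m : ℕ} (hm : Module.finrank 𝕜 E = m) (h : m = n)
    (i : Fin m) : hT.eigenvalues hm i = hT.eigenvalues (hm.trans h) (Fin.cast h i) := by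
  subst h
  rfl

end LinearMap.IsSymmetric

namespace Matrix.IsHermitian

variable {𝕜 m : Type*} [RCLike 𝕜] [Fintype m] [DecidableEq m] {A : Matrix m m 𝕜}

theorem trace_cfc (hA : A.IsHermitian) (f : ℝ → ℝ) :
    (cfc f A).trace = ∑ i, (f (hA.eigenvalues i) : 𝕜) := by
  rw [hA.cfc_eq, IsHermitian.cfc, Unitary.conjStarAlgAut_apply, trace_mul_cycle,
    Unitary.coe_star_mul_self, one_mul, trace_diagonal]
  rfl

end Matrix.IsHermitian

namespace QI

theorem traceNorm_eq_sum_abs_eigenvalues {m : Type*} [Fintype m] [DecidableEq m]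
    {C : Matrix m m ℂ} (hC : C.IsHermitian) : traceNorm C = ∑ i, |hC.eigenvalues i| := by
  have hCC : Cᴴ * Cᴴᴴ = C ^ 2 := by rw [Matrix.conjTranspose_conjTranspose, hC.eq, sq]
  calc traceNorm C = RCLike.re (cfc Real.sqrt (Cᴴ * Cᴴᴴ)).trace := by
        rw [(Matrix.isHermitian_mul_conjTranspose_self Cᴴ).trace_cfc]
        simp [traceNorm]
    _ = RCLike.re (cfc (fun x => √(x ^ 2)) C).trace := by rw [hCC, cfc_comp_pow Real.sqrt 2 C]
    _ = ∑ i, |hC.eigenvalues i| := by simp [hC.trace_cfc, Real.sqrt_sq_eq_abs]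

variable {n : ℕ} {A B : Matrix (Fin n) (Fin n) ℂ}

theorem sortedEigsDesc_eq_eigenvalues (hA : A.IsHermitian) :
    sortedEigsDesc hA =
      (Matrix.isSymmetric_toEuclideanLin_iff.mpr hA).eigenvalues finrank_euclideanSpace_fin := by
  -- Both sides are antitone rearrangements of the same tuple.
  set hT := Matrix.isSymmetric_toEuclideanLin_iff.mpr hA
  set μ := hT.eigenvalues finrank_euclideanSpace_fin
  set e : Fin (Fintype.card (Fin n)) ≃ Fin n := Fintype.equivOfCardEq (Fintype.card_fin _)
  set τ : Equiv.Perm (Fin n) := e.symm.trans (finCongr (Fintype.card_fin n))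
  have hAμ : hA.eigenvalues = μ ∘ τ := funext fun i =>
    hT.eigenvalues_cast finrank_euclideanSpace (Fintype.card_fin n) _
  have hsort :
      sortedEigsDesc hA = μ ∘ (Fin.revPerm.trans ((Tuple.sort hA.eigenvalues).trans τ)) := by
    funext i
    simp [sortedEigsDesc, hAμ]
  have hanti : Antitone (sortedEigsDesc hA) :=
    (Tuple.monotone_sort hA.eigenvalues).comp_antitone Fin.rev_anti
  rw [hsort] at hanti ⊢
  exact Tuple.unique_antitone (τ := Equiv.refl _) hanti (hT.eigenvalues_antitone _)

theorem sortedEigsDesc_mono (hA : A.IsHermitian) (hB : B.IsHermitian) (hAB : A ≤ B) (k : Fin n) :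
    sortedEigsDesc hA k ≤ sortedEigsDesc hB k := by
  rw [sortedEigsDesc_eq_eigenvalues, sortedEigsDesc_eq_eigenvalues]
  refine LinearMap.IsSymmetric.eigenvalues_mono _ _ _ ?_ k
  rw [LinearMap.le_def, ← map_sub, Matrix.isPositive_toEuclideanLin_iff]
  exact hAB

theorem sum_sortedEigsDesc (hA : A.IsHermitian) :
    ∑ k, sortedEigsDesc hA k = RCLike.re A.trace := by
  rw [hA.trace_eq_sum_eigenvalues, map_sum]
  simp only [RCLike.ofReal_re]
  exact Equiv.sum_comp (Fin.revPerm.trans (Tuple.sort hA.eigenvalues)) hA.eigenvalues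

theorem sum_abs_sub_sortedEigsDesc_le_traceNorm (hA : A.IsHermitian) (hB : B.IsHermitian) :
    ∑ k, |sortedEigsDesc hA k - sortedEigsDesc hB k| ≤ traceNorm (A - B) := by
  set C := A - B
  have hC : C.IsHermitian := hA.sub hB
  have hBC : B + C⁺ = A + C⁻ := by
    rw [sub_eq_iff_eq_add.mp (CFC.posPart_sub_negPart C hC), ← add_assoc, add_comm B,
      sub_add_cancel]
  have hD : (B + C⁺).IsHermitian :=
    hB.add (Matrix.nonneg_iff_posSemidef.mp (CFC.posPart_nonneg C)).isHermitian
  have hBD : B ≤ B + C⁺ := le_add_of_nonneg_right (CFC.posPart_nonneg C)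
  have hAD : A ≤ B + C⁺ := hBC ▸ le_add_of_nonneg_right (CFC.negPart_nonneg C)
  have htr : RCLike.re (C⁺).trace + RCLike.re (C⁻).trace = traceNorm C := by
    rw [← map_add, ← Matrix.trace_add, CFC.posPart_add_negPart C hC, CFC.abs_eq_cfc_norm C hC,
      hC.trace_cfc, traceNorm_eq_sum_abs_eigenvalues hC]
    simp
  calc ∑ k, |sortedEigsDesc hA k - sortedEigsDesc hB k|
      ≤ ∑ k, ((sortedEigsDesc hD k - sortedEigsDesc hA k) +
          (sortedEigsDesc hD k - sortedEigsDesc hB k)) := by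
        refine Finset.sum_le_sum fun k _ => abs_le.mpr ⟨?_, ?_⟩ <;>
          linarith [sortedEigsDesc_mono hA hD hAD k, sortedEigsDesc_mono hB hD hBD k]
    _ = traceNorm C := by
        rw [Finset.sum_add_distrib, Finset.sum_sub_distrib, Finset.sum_sub_distrib,
          sum_sortedEigsDesc, sum_sortedEigsDesc, sum_sortedEigsDesc, ← htr]
        nth_rw 1 [hBC]
        simp only [Matrix.trace_add, map_add]
        ring

end QI

theorem Real.abs_log_sub_log_le_div {a b c : ℝ} (hc : 0 < c) (ha : c ≤ a) (hb : c ≤ b) :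
    |Real.log a - Real.log b| ≤ |a - b| / c := by
  wlog hba : b ≤ a generalizing a b
  · rw [abs_sub_comm, abs_sub_comm a]
    exact this hb ha (le_of_not_ge hba)
  have hb0 : 0 < b := hc.trans_le hb
  rw [abs_of_nonneg (sub_nonneg.mpr (Real.log_le_log hb0 hba)), abs_of_nonneg (sub_nonneg.mpr hba),
    ← Real.log_div (hb0.trans_le hba).ne' hb0.ne']
  calc Real.log (a / b) ≤ a / b - 1 := Real.log_le_sub_one_of_pos (div_pos (hb0.trans_le hba) hb0)
    _ = (a - b) / b := by field_simp
    _ ≤ (a - b) / c := div_le_div_of_nonneg_left (sub_nonneg.mpr hba) hc hb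

theorem sum_filter_abs_neg_log_sub_neg_log_le {ι : Type*} [Fintype ι] (a b : ι → ℝ) {Λ : ℝ}
    (hΛ : 0 < Λ) :
    ∑ i ∈ Finset.univ.filter (fun i => 1 / Λ ≤ a i ∧ 1 / Λ ≤ b i),
      |(-Real.log (a i)) - (-Real.log (b i))| ≤ Λ * ∑ i, |a i - b i| := by
  calc ∑ i ∈ Finset.univ.filter (fun i => 1 / Λ ≤ a i ∧ 1 / Λ ≤ b i),
        |(-Real.log (a i)) - (-Real.log (b i))|
      ≤ ∑ i ∈ Finset.univ.filter (fun i => 1 / Λ ≤ a i ∧ 1 / Λ ≤ b i), Λ * |a i - b i| := by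
        refine Finset.sum_le_sum fun i hi => ?_
        obtain ⟨ha, hb⟩ := (Finset.mem_filter.mp hi).2
        rw [neg_sub_neg, abs_sub_comm, mul_comm]
        simpa only [one_div, div_inv_eq_mul] using
          Real.abs_log_sub_log_le_div (one_div_pos.mpr hΛ) ha hb
    _ ≤ ∑ i, Λ * |a i - b i| :=
        Finset.sum_le_sum_of_subset_of_nonneg (Finset.filter_subset _ _) fun _ _ _ => by positivity
    _ = Λ * ∑ i, |a i - b i| := (Finset.mul_sum _ _ _).symm

theorem cutoff_log_spectrum_close_general {n : ℕ} (ρ σ : Matrix (Fin n) (Fin n) ℂ)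
    (hherm : ρ.IsHermitian) (hherm' : σ.IsHermitian)
    (ε Λ : ℝ) (hΛ : 0 < Λ) (hε : traceNorm (ρ - σ) ≤ ε) :
    ∑ i ∈ Finset.univ.filter
        (fun i => 1 / Λ ≤ sortedEigsDesc hherm i ∧ 1 / Λ ≤ sortedEigsDesc hherm' i),
      |(-Real.log (sortedEigsDesc hherm i)) - (-Real.log (sortedEigsDesc hherm' i))| ≤
      Λ * ε :=
  calc _ ≤ Λ * ∑ i, |sortedEigsDesc hherm i - sortedEigsDesc hherm' i| :=
        sum_filter_abs_neg_log_sub_neg_log_le _ _ hΛ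
    _ ≤ Λ * traceNorm (ρ - σ) := by gcongr; exact sum_abs_sub_sortedEigsDesc_le_traceNorm _ _
    _ ≤ Λ * ε := by gcongr

/-- **Cut-off entanglement spectra are close for close states**: if `ρ`, `σ` are
density matrices with `‖ρ - σ‖₁ ≤ ε` and `Λ > 0`, then comparing, at matching
positions of the decreasingly sorted spectra, the values `-log λ` over the
eigenvalues that are at least `1/Λ`, the `ℓ¹` distance is at most `Λ ε`
(by `Λ`-Lipschitz continuity of `-log` on `[1/Λ, ∞)`). -/
theorem cutoff_log_spectrum_close {n : ℕ} (ρ σ : Matrix (Fin n) (Fin n) ℂ)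
    (hρ : IsDensityMatrix ρ) (hσ : IsDensityMatrix σ)
    (hherm : ρ.IsHermitian) (hherm' : σ.IsHermitian)
    (ε Λ : ℝ) (hΛ : 0 < Λ) (hε : traceNorm (ρ - σ) ≤ ε) :
    ∑ i ∈ Finset.univ.filter
        (fun i => 1 / Λ ≤ sortedEigsDesc hherm i ∧ 1 / Λ ≤ sortedEigsDesc hherm' i),
      |(-Real.log (sortedEigsDesc hherm i)) - (-Real.log (sortedEigsDesc hherm' i))| ≤
      Λ * ε :=
  cutoff_log_spectrum_close_general ρ σ hherm hherm' ε Λ hΛ hε
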